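/- Let F be a decomposable class of measurable functions (for any φ₁, φ₂ ∈ F and any measurable set Z, the function equal to φ₁ on Z and φ₂ on the complement of Z is in F). If (P(v), v) and (P(w), w) lie in the cost-constraint epigraph C and C is convex, then for all a ∈ [0,1], P(a·v + (1−a)·w) ≤ a·P(v) + (1−a)·P(w). -/
import Mathlib


open Classical in
/-- Let `F` be a decomposable class of functions and `C` the
cost-constraint epigraph. If `(P v, v)` and `(P w, w)` lie in `C` and `C` is convex,
then `P (a•v + (1−a)•w) ≤ a·P v + (1−a)·P w` for all `a ∈ [0,1]`. -/
theorem stmt_14 {m : ℕ} {X : Type*} (F : Set (X → ℝ)) (Zs : Set (Set X))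
    (hdec : ∀ φ₁ ∈ F, ∀ φ₂ ∈ F, ∀ Z ∈ Zs,
      (fun x => if x ∈ Z then φ₁ x else φ₂ x) ∈ F)
    (R : (X → ℝ) → Fin (m + 1) → ℝ)
    (C : Set (Fin (m + 1) → ℝ))
    (hCdef : C = {s | ∃ φ ∈ F, ∀ i, R φ i ≤ s i})
    (hC : Convex ℝ C)
    (P : (Fin m → ℝ) → EReal)
    (hPdef : ∀ u : Fin m → ℝ,
      P u = sInf ((fun φ => ((R φ 0 : ℝ) : EReal)) ''
        {φ | φ ∈ F ∧ ∀ i : Fin m, R φ i.succ ≤ u i}))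
    (v w : Fin m → ℝ) (Pv Pw : ℝ)
    (hPv : P v = (Pv : EReal)) (hPw : P w = (Pw : EReal))
    (hvC : Fin.cons Pv v ∈ C) (hwC : Fin.cons Pw w ∈ C)
    (a : ℝ) (ha0 : 0 ≤ a) (ha1 : a ≤ 1) :
    P (a • v + (1 - a) • w) ≤ ((a * Pv + (1 - a) * Pw : ℝ) : EReal) := by
  have hmem : a • (Fin.cons Pv v : Fin (m+1) → ℝ) + (1 - a) • (Fin.cons Pw w : Fin (m+1) → ℝ) ∈ C :=
    hC hvC hwC ha0 (by linarith) (by ring)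
  rw [hCdef] at hmem
  obtain ⟨φ, hφF, hφ⟩ := hmem
  have h0 : R φ 0 ≤ a * Pv + (1 - a) * Pw := by
    have := hφ 0
    simpa [Fin.cons_zero] using this
  have hfeas : ∀ i : Fin m, R φ i.succ ≤ (a • v + (1 - a) • w) i := by
    intro i
    have := hφ i.succ
    simpa [Fin.cons_succ] using this
  rw [hPdef]
  refine le_trans (sInf_le ⟨φ, ⟨hφF, hfeas⟩, rfl⟩) ?_
  simpa using EReal.coe_le_coe_iff.mpr h0
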